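/- Let δ > 0 and A > 0, and suppose that M₂(x, h) ≤ A h x log x for all x ≥ 2 and all h with 1 ≤ h ≤ x^{1/2 + δ}. Then there is a constant C, depending only on A and δ, such that 𝒞(x) = Σ_{n : p_{n+1} ≤ x} (p_{n+1} − p_n)² ≤ C x log² x for all x ≥ 2. -/

import Mathlib

open scoped Classical

/-- The n-th prime (0-indexed: `nthPrime 0 = 2`). -/
noncomputable def nthPrime (n : ℕ) : ℕ := Nat.nth Nat.Prime n

/-- 𝒞(x) = Σ_{p_{n+1} ≤ x} (p_{n+1} - p_n)². -/
noncomputable def Csum (x : ℝ) : ℝ :=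
  ∑ n ∈ (Finset.range ⌈x⌉₊).filter (fun n => (nthPrime (n + 1) : ℝ) ≤ x),
    ((nthPrime (n + 1) : ℝ) - nthPrime n) ^ 2

/-- The Chebyshev theta function θ(t) = Σ_{p ≤ t} log p. -/
noncomputable def chebTheta (t : ℝ) : ℝ :=
  ∑ p ∈ (Finset.range (⌊t⌋₊ + 1)).filter Nat.Prime, Real.log p

/-- The second moment M₂(x, h) = ∫₁ˣ (θ(y+h) - θ(y) - h)² dy. -/
noncomputable def M2 (x h : ℝ) : ℝ :=
  ∫ y in (1:ℝ)..x, (chebTheta (y + h) - chebTheta y - h) ^ 2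

/-! θ is constant between consecutive primes, so on (p_n, p_{n+1} - h) the integrand of
M₂(x, h) equals h². Summing over the gaps g_n ≥ 2h gives h² Σ_{g_n ≥ 2h} g_n ≤ 2 M₂(x, h), hence
Σ_{g_n ≥ 2h} g_n ≤ 2A x log x / h for 1 ≤ h ≤ √x. Writing g² = Σ_{t < g} g, the gaps below 2√x
contribute at most Σ g_n + Σ_{1 ≤ t < 2√x} 4A x log x / (t + 1) = O(x log² x), with Σ g_n ≤ x by
telescoping, and the gaps of size at least 2√x contribute at most
(Σ_{g_n ≥ 2√x} g_n)² ≤ (2A √x log x)². -/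

open Finset MeasureTheory

theorem Finset.sum_natCast_sq_eq_sum_range_sum_filter_lt {ι : Type*} (s : Finset ι) (g : ι → ℕ)
    {T : ℕ} (hT : ∀ i ∈ s, g i ≤ T) :
    ∑ i ∈ s, (g i : ℝ) ^ 2 = ∑ t ∈ range T, ∑ i ∈ s with t < g i, (g i : ℝ) := by
  simp_rw [sum_filter]
  rw [sum_comm]
  refine sum_congr rfl fun i hi => ?_
  rw [← sum_filter, sum_const, nsmul_eq_mul, range_eq_Ico, Ico_filter_lt, Nat.card_Ico,
    min_eq_right (hT i hi), Nat.sub_zero, sq]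

theorem Finset.sum_sub_le_sub_of_monotone {f : ℕ → ℝ} (hf : Monotone f) (s : Finset ℕ) {x : ℝ}
    (h0 : f 0 ≤ x) (hs : ∀ n ∈ s, f (n + 1) ≤ x) : ∑ n ∈ s, (f (n + 1) - f n) ≤ x - f 0 := by
  induction s using Finset.induction_on_max generalizing x with
  | empty => simpa using h0
  | insert a s ha ih =>
    have hs' : ∀ n ∈ s, f (n + 1) ≤ f a := fun n hn => hf (ha n hn)
    rw [sum_insert fun has => (ha a has).false]
    linarith [ih (hf (Nat.zero_le a)) hs', hs a (mem_insert_self a s)]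

lemma nthPrime_strictMono : StrictMono nthPrime :=
  Nat.nth_strictMono Nat.infinite_setOfPred_prime

lemma monotone_nthPrime_cast : Monotone fun n => (nthPrime n : ℝ) :=
  fun _ _ h => Nat.cast_le.2 (nthPrime_strictMono.monotone h)

lemma two_le_nthPrime (n : ℕ) : 2 ≤ nthPrime n :=
  (Nat.nth_mem_of_infinite Nat.infinite_setOfPred_prime n).two_le

noncomputable def primeGap (n : ℕ) : ℕ := nthPrime (n + 1) - nthPrime n

lemma primeGap_cast (n : ℕ) : (primeGap n : ℝ) = nthPrime (n + 1) - nthPrime n :=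
  Nat.cast_sub (nthPrime_strictMono n.lt_succ_self).le

noncomputable def gapIndices (x : ℝ) : Finset ℕ :=
  (range ⌈x⌉₊).filter (fun n => (nthPrime (n + 1) : ℝ) ≤ x)

lemma Csum_eq_sum_primeGap_sq (x : ℝ) : Csum x = ∑ n ∈ gapIndices x, (primeGap n : ℝ) ^ 2 := by
  simp only [Csum, gapIndices, primeGap_cast]

lemma nthPrime_succ_le_of_mem_gapIndices {x : ℝ} {n : ℕ} (hn : n ∈ gapIndices x) :
    (nthPrime (n + 1) : ℝ) ≤ x :=
  (mem_filter.1 hn).2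

lemma sum_primeGap_le {x : ℝ} (hx : 2 ≤ x) : ∑ n ∈ gapIndices x, (primeGap n : ℝ) ≤ x := by
  have h0 : (nthPrime 0 : ℝ) = 2 := by exact_mod_cast Nat.nth_prime_zero_eq_two
  simp only [primeGap_cast]
  linarith [sum_sub_le_sub_of_monotone monotone_nthPrime_cast (gapIndices x) (h0 ▸ hx)
    fun n hn => nthPrime_succ_le_of_mem_gapIndices hn]

lemma chebTheta_nonneg (t : ℝ) : 0 ≤ chebTheta t :=
  sum_nonneg fun p _ => Real.log_natCast_nonneg p

lemma chebTheta_mono : Monotone chebTheta := fun _ _ hst =>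
  sum_le_sum_of_subset_of_nonneg
    (filter_subset_filter _ (range_subset_range.2 (Nat.add_le_add_right (Nat.floor_mono hst) 1)))
    fun p _ _ => Real.log_natCast_nonneg p

lemma measurable_chebTheta : Measurable chebTheta :=
  (measurable_from_nat (f := fun m : ℕ => ∑ p ∈ (range (m + 1)).filter Nat.Prime, Real.log p)).comp
    Nat.measurable_floor

lemma chebTheta_eq_of_mem_Ico {n : ℕ} {t : ℝ}
    (ht : t ∈ Set.Ico (nthPrime n : ℝ) (nthPrime (n + 1))) :
    chebTheta t = chebTheta (nthPrime n) := by
  have ht0 : 0 ≤ t := (Nat.cast_nonneg _).trans ht.1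
  unfold chebTheta
  congr 1
  ext q
  simp only [mem_filter, mem_range, Nat.lt_succ_iff, Nat.floor_natCast, and_congr_left_iff]
  intro hq
  refine ⟨fun hqt => Nat.le_nth_of_lt_nth_succ ?_ hq, fun hqn => hqn.trans (Nat.le_floor ht.1)⟩
  exact_mod_cast ((Nat.le_floor_iff ht0).1 hqt).trans_lt ht.2

lemma measurable_chebTheta_sq_deviation (h : ℝ) :
    Measurable fun y => (chebTheta (y + h) - chebTheta y - h) ^ 2 :=
  (((measurable_chebTheta.comp (measurable_add_const h)).sub measurable_chebTheta).sub
    measurable_const).pow_const 2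

lemma integrableOn_chebTheta_sq_deviation {h : ℝ} (hh : 0 ≤ h) (a b : ℝ) :
    IntegrableOn (fun y => (chebTheta (y + h) - chebTheta y - h) ^ 2) (Set.Ioc a b) := by
  refine Measure.integrableOn_of_bounded (M := (chebTheta (b + h) + h) ^ 2)
    (by simp [Real.volume_Ioc]) (measurable_chebTheta_sq_deviation h).aestronglyMeasurable
    ((ae_restrict_iff' measurableSet_Ioc).2 (ae_of_all _ fun y hy => ?_))
  have hθy : chebTheta y ≤ chebTheta (y + h) := chebTheta_mono (by linarith)
  have hθb : chebTheta (y + h) ≤ chebTheta (b + h) := chebTheta_mono (by linarith [hy.2])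
  rw [Real.norm_eq_abs, abs_of_nonneg (sq_nonneg _)]
  exact sq_le_sq' (by linarith [chebTheta_nonneg y]) (by linarith [chebTheta_nonneg y])

theorem sum_sq_mul_primeGap_sub_le_M2 {x h : ℝ} (hx : 1 ≤ x) (hh : 0 ≤ h) :
    ∑ n ∈ gapIndices x with h ≤ primeGap n, h ^ 2 * ((primeGap n : ℝ) - h) ≤ M2 x h := by
  set f := fun y => (chebTheta (y + h) - chebTheta y - h) ^ 2
  set I : ℕ → Set ℝ := fun n => Set.Ioo (nthPrime n : ℝ) (nthPrime (n + 1) - h)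
  have hfI : ∀ n, ∀ y ∈ I n, f y = h ^ 2 := fun n y hy => by
    have hy' : ∀ z, y ≤ z → z ≤ y + h → chebTheta z = chebTheta (nthPrime n) := fun z hyz hzy =>
      chebTheta_eq_of_mem_Ico ⟨hy.1.le.trans hyz, by linarith [hy.2]⟩
    simp only [f, hy' (y + h) (by linarith) le_rfl, hy' y le_rfl (by linarith)]
    ring
  have hIx : ∀ n ∈ gapIndices x, I n ⊆ Set.Ioc 1 x := fun n hn y hy =>
    ⟨lt_of_lt_of_le' hy.1 (by exact_mod_cast (two_le_nthPrime n).trans' one_le_two),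
      by linarith [hy.2, nthPrime_succ_le_of_mem_gapIndices hn]⟩
  have hIsub : ∀ n, I n ⊆ Set.Ioo (nthPrime n : ℝ) (nthPrime (n + 1)) :=
    fun _ => Set.Ioo_subset_Ioo_right (sub_le_self _ hh)
  have hdisj : Pairwise (Function.onFun Disjoint I) :=
    monotone_nthPrime_cast.pairwise_disjoint_on_Ioo_succ.mono fun m n h =>
      h.mono (hIsub m) (hIsub n)
  have hint := integrableOn_chebTheta_sq_deviation hh 1 x
  set s := {n ∈ gapIndices x | h ≤ primeGap n}
  calc ∑ n ∈ s, h ^ 2 * ((primeGap n : ℝ) - h)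
      = ∑ n ∈ s, ∫ y in I n, f y := by
        refine sum_congr rfl fun n hn => ?_
        rw [setIntegral_congr_fun measurableSet_Ioo (hfI n), setIntegral_const,
          Real.volume_real_Ioo_of_le (by linarith [(mem_filter.1 hn).2, primeGap_cast n]),
          smul_eq_mul, primeGap_cast]
        ring
    _ = ∫ y in ⋃ n ∈ s, I n, f y :=
        (integral_biUnion_finset _ (fun _ _ => measurableSet_Ioo) (hdisj.set_pairwise _)
          fun n hn => hint.mono_set (hIx n (mem_filter.1 hn).1)).symm
    _ ≤ ∫ y in Set.Ioc 1 x, f y :=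
        setIntegral_mono_set hint (ae_of_all _ fun _ => sq_nonneg _)
          (Set.iUnion₂_subset fun n hn => hIx n (mem_filter.1 hn).1).eventuallyLE
    _ = M2 x h := (intervalIntegral.integral_of_le hx).symm

theorem sq_mul_sum_primeGap_le_two_mul_M2 {x h : ℝ} (hx : 1 ≤ x) (hh : 0 ≤ h) :
    h ^ 2 * ∑ n ∈ gapIndices x with 2 * h ≤ primeGap n, (primeGap n : ℝ) ≤ 2 * M2 x h :=
  calc h ^ 2 * ∑ n ∈ gapIndices x with 2 * h ≤ primeGap n, (primeGap n : ℝ)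
      ≤ 2 * ∑ n ∈ gapIndices x with 2 * h ≤ primeGap n, h ^ 2 * ((primeGap n : ℝ) - h) := by
        rw [mul_sum, mul_sum]
        exact sum_le_sum fun n hn => by nlinarith [(mem_filter.1 hn).2, sq_nonneg h]
    _ ≤ 2 * ∑ n ∈ gapIndices x with h ≤ primeGap n, h ^ 2 * ((primeGap n : ℝ) - h) := by
        gcongr 2 * ?_
        refine sum_le_sum_of_subset_of_nonneg (fun n hn => ?_) ?_
        · simp only [mem_filter] at hn ⊢
          exact ⟨hn.1, by linarith [hn.2]⟩
        · intro n hn _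
          exact mul_nonneg (sq_nonneg h) (sub_nonneg.2 (mem_filter.1 hn).2)
    _ ≤ 2 * M2 x h := by gcongr; exact sum_sq_mul_primeGap_sub_le_M2 hx hh

theorem mul_sum_primeGap_le_of_M2_le {x h B : ℝ} (hx : 1 ≤ x) (hh : 0 < h)
    (hM : M2 x h ≤ h * B) :
    h * ∑ n ∈ gapIndices x with 2 * h ≤ primeGap n, (primeGap n : ℝ) ≤ 2 * B := by
  refine le_of_mul_le_mul_left ?_ hh
  nlinarith [sq_mul_sum_primeGap_le_two_mul_M2 hx hh.le]

theorem sum_sq_primeGap_ge_two_mul_sqrt_le {x B : ℝ} (hx : 1 ≤ x)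
    (hM : M2 x √x ≤ √x * B) :
    ∑ n ∈ gapIndices x with 2 * √x ≤ primeGap n, (primeGap n : ℝ) ^ 2 ≤ 4 * B ^ 2 / x := by
  have hsum := mul_sum_primeGap_le_of_M2_le hx (Real.sqrt_pos.2 (by linarith)) hM
  refine (sum_sq_le_sq_sum_of_nonneg fun _ _ => Nat.cast_nonneg _).trans ?_
  rw [le_div_iff₀ (by linarith)]
  calc (∑ n ∈ gapIndices x with 2 * √x ≤ primeGap n, (primeGap n : ℝ)) ^ 2 * x
      = (√x * ∑ n ∈ gapIndices x with 2 * √x ≤ primeGap n, (primeGap n : ℝ)) ^ 2 := by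
        rw [mul_pow, Real.sq_sqrt (by linarith)]
        ring
    _ ≤ (2 * B) ^ 2 := pow_le_pow_left₀ (by positivity) hsum 2
    _ = 4 * B ^ 2 := by ring

theorem sum_primeGap_gt_le_of_M2_le {x B : ℝ} {t : ℕ} (hx : 1 ≤ x)
    (hM : M2 x (((t : ℝ) + 1) / 2) ≤ ((t : ℝ) + 1) / 2 * B) :
    ∑ n ∈ gapIndices x with t < primeGap n, (primeGap n : ℝ) ≤ 4 * B * ((t : ℝ) + 1)⁻¹ := by
  have hsum := mul_sum_primeGap_le_of_M2_le hx (by positivity) hM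
  calc ∑ n ∈ gapIndices x with t < primeGap n, (primeGap n : ℝ)
      = ∑ n ∈ gapIndices x with 2 * (((t : ℝ) + 1) / 2) ≤ primeGap n, (primeGap n : ℝ) := by
        refine sum_congr (filter_congr fun n _ => ?_) fun _ _ => rfl
        rw [mul_div_cancel₀ _ two_ne_zero, ← Nat.cast_succ, Nat.cast_le, Nat.succ_le_iff]
    _ ≤ 2 * B / (((t : ℝ) + 1) / 2) := (le_div_iff₀' (by positivity)).2 hsum
    _ = 4 * B * ((t : ℝ) + 1)⁻¹ := by field_simp; ring

lemma log_floor_two_mul_sqrt_le {x : ℝ} (hx : 2 ≤ x) : Real.log ⌊2 * √x⌋₊ ≤ 2 * Real.log x := by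
  have hsqrt : 1 ≤ √x := Real.one_le_sqrt.2 (by linarith)
  have h2x : 2 * √x ≤ x ^ 2 := by
    nlinarith [Real.sqrt_le_sqrt (by nlinarith : x ≤ x ^ 2), Real.sqrt_sq (by linarith : 0 ≤ x)]
  calc Real.log ⌊2 * √x⌋₊ ≤ Real.log (x ^ 2) :=
        Real.log_le_log (Nat.cast_pos.2 (Nat.floor_pos.2 (by linarith)))
          ((Nat.floor_le (by positivity)).trans h2x)
    _ = 2 * Real.log x := by simp [Real.log_pow]

theorem sum_sq_primeGap_lt_two_mul_sqrt_le {x B : ℝ} (hx : 2 ≤ x) (hB : 0 ≤ B)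
    (hM : ∀ h, 1 ≤ h → h ≤ √x → M2 x h ≤ h * B) :
    ∑ n ∈ gapIndices x with (primeGap n : ℝ) < 2 * √x, (primeGap n : ℝ) ^ 2 ≤
      x + 4 * B * (1 + 2 * Real.log x) := by
  set T := ⌊2 * √x⌋₊
  set s := {n ∈ gapIndices x | (primeGap n : ℝ) < 2 * √x}
  have hT0 : 0 ∈ range T :=
    mem_range.2 (Nat.floor_pos.2 (by linarith [Real.one_le_sqrt.2 (by linarith : 1 ≤ x)]))
  have hzero : ∑ n ∈ s with 0 < primeGap n, (primeGap n : ℝ) ≤ x :=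
    (sum_le_sum_of_subset_of_nonneg (filter_subset _ _ |>.trans (filter_subset _ _))
      fun _ _ _ => Nat.cast_nonneg _).trans (sum_primeGap_le hx)
  -- the threshold `t = 0` would need `h = 1 / 2`, outside the range of `hM`
  have hpos : ∀ t ∈ (range T).erase 0,
      ∑ n ∈ s with t < primeGap n, (primeGap n : ℝ) ≤ 4 * B * ((t : ℝ) + 1)⁻¹ := by
    intro t ht
    obtain ⟨ht0, htT⟩ := mem_erase.1 ht
    have h1 : 1 ≤ ((t : ℝ) + 1) / 2 := by
      have : (1 : ℝ) ≤ t := Nat.one_le_cast.2 (Nat.one_le_iff_ne_zero.2 ht0)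
      linarith
    have hle : ((t : ℝ) + 1) / 2 ≤ √x := by
      have : ((t + 1 : ℕ) : ℝ) ≤ 2 * √x := (Nat.le_floor_iff (by positivity)).1 (mem_range.1 htT)
      push_cast at this
      linarith
    refine le_trans ?_ (sum_primeGap_gt_le_of_M2_le (by linarith) (hM _ h1 hle))
    exact sum_le_sum_of_subset_of_nonneg (filter_subset_filter _ (filter_subset _ _))
      fun _ _ _ => Nat.cast_nonneg _
  calc ∑ n ∈ s, (primeGap n : ℝ) ^ 2
      = ∑ t ∈ range T, ∑ n ∈ s with t < primeGap n, (primeGap n : ℝ) :=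
        sum_natCast_sq_eq_sum_range_sum_filter_lt s primeGap
          fun n hn => Nat.le_floor (mem_filter.1 hn).2.le
    _ = ∑ n ∈ s with 0 < primeGap n, (primeGap n : ℝ) +
          ∑ t ∈ (range T).erase 0, ∑ n ∈ s with t < primeGap n, (primeGap n : ℝ) :=
        (add_sum_erase _ _ hT0).symm
    _ ≤ x + ∑ t ∈ range T, 4 * B * ((t : ℝ) + 1)⁻¹ := by
        gcongr
        exact (sum_le_sum hpos).trans (sum_le_sum_of_subset_of_nonneg (erase_subset _ _)
          fun _ _ _ => by positivity)
    _ = x + 4 * B * harmonic T := by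
        rw [← mul_sum]
        push_cast [harmonic]
        rfl
    _ ≤ x + 4 * B * (1 + 2 * Real.log x) := by
        gcongr
        linarith [harmonic_le_one_add_log T, log_floor_two_mul_sqrt_le hx]

theorem Csum_le_of_M2_le {x B : ℝ} (hx : 2 ≤ x) (hB : 0 ≤ B)
    (hM : ∀ h, 1 ≤ h → h ≤ √x → M2 x h ≤ h * B) :
    Csum x ≤ x + 4 * B * (1 + 2 * Real.log x) + 4 * B ^ 2 / x := by
  rw [Csum_eq_sum_primeGap_sq,
    ← sum_filter_add_sum_filter_not _ fun n => (primeGap n : ℝ) < 2 * √x]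
  simp only [not_lt]
  exact add_le_add (sum_sq_primeGap_lt_two_mul_sqrt_le hx hB hM)
    (sum_sq_primeGap_ge_two_mul_sqrt_le (by linarith)
      (hM √x (Real.one_le_sqrt.2 (by linarith)) le_rfl))

/-- If M₂(x, h) ≤ A h x log x for 1 ≤ h ≤ x^{1/2+δ}, then 𝒞(x) ≤ C x log² x. -/
theorem Csum_from_second_moment (δ A : ℝ) (hδ : 0 < δ) (hA : 0 < A)
    (hM : ∀ x h : ℝ, 2 ≤ x → 1 ≤ h → h ≤ x ^ ((1 : ℝ) / 2 + δ) →
      M2 x h ≤ A * h * x * Real.log x) :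
    ∃ C : ℝ, ∀ x : ℝ, 2 ≤ x → Csum x ≤ C * x * Real.log x ^ 2 := by
  refine ⟨4 * A ^ 2 + 16 * A + 4, fun x hx => ?_⟩
  have hL : 1 / 2 ≤ Real.log x :=
    (Real.log_two_gt_d9.trans_le (Real.log_le_log two_pos hx)).le.trans' (by norm_num)
  have hsqrt : √x ≤ x ^ ((1 : ℝ) / 2 + δ) := by
    rw [Real.sqrt_eq_rpow]
    exact Real.rpow_le_rpow_of_exponent_le (by linarith) (by linarith)
  have hCsum := Csum_le_of_M2_le hx (B := A * x * Real.log x) (by positivity)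
    fun h h1 hh => (hM x h hx h1 (hh.trans hsqrt)).trans_eq (by ring)
  have hx0 : 0 < x := by linarith
  have hL1 : x ≤ x * (4 * Real.log x ^ 2) := le_mul_of_one_le_right hx0.le (by nlinarith)
  have hL2 : A * x * Real.log x ≤ A * x * (2 * Real.log x ^ 2) :=
    mul_le_mul_of_nonneg_left (by nlinarith) (by positivity)
  rw [show 4 * (A * x * Real.log x) ^ 2 / x = 4 * A ^ 2 * x * Real.log x ^ 2 by
    field_simp] at hCsum
  linarith
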